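/- arXiv:1705.03980 — 8 statements merged into one kernel-verified Lean document; each statement's English description precedes it below -/
import Mathlib

section
/- Let R be a commutative ring and M an R-module with trivial annihilator, i.e., Ann_R(M) = (0). Then M is an Auslander R-module: every zero-divisor of R is a zero-divisor on M. -/
/-- `Z_R(M)`: the set of zero-divisors of `R` on the `R`-module `M`, i.e. those `r : R`
for which there exists a nonzero `m : M` with `r • m = 0`. -/
def zeroDivisorsOn (R : Type*) [CommRing R] (M : Type*) [AddCommGroup M] [Module R M] :
    Set R :=
  {r : R | ∃ m : M, m ≠ 0 ∧ r • m = 0}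

/-- A module with trivial annihilator is an Auslander module. -/
theorem faithful_auslander (R : Type*) [CommRing R]
    (M : Type*) [AddCommGroup M] [Module R M]
    (hann : Module.annihilator R M = ⊥) :
    zeroDivisorsOn R R ⊆ zeroDivisorsOn R M := by
  rintro r ⟨s, hs, hrs⟩
  obtain ⟨m, hsm⟩ : ∃ m : M, s • m ≠ 0 := by
    by_contra! hsM
    exact hs (by simpa [hann] using Module.mem_annihilator.mpr hsM)
  exact ⟨s • m, hsm, by rw [smul_smul, ← smul_eq_mul, hrs, zero_smul]⟩
end

section
/- Let R be a commutative ring and M an R-module with Ann_R(M) = (0) (equivalently, for every nonzero s ∈ R there is an x ∈ M with s • x ≠ 0). Then the R-module Hom_R(M, M) of R-linear endomorphisms of M is an Auslander R-module: every zero-divisor of R is a zero-divisor on Hom_R(M, M). -/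
theorem zeroDivisorsOn_subset_of_injective {R M N : Type*} [CommRing R]
    [AddCommGroup M] [Module R M] [AddCommGroup N] [Module R N]
    (f : M →ₗ[R] N) (hf : Function.Injective f) :
    zeroDivisorsOn R M ⊆ zeroDivisorsOn R N :=
  fun r ⟨m, hm, hrm⟩ => ⟨f m, (map_ne_zero_iff f hf).2 hm, by rw [← map_smul, hrm, map_zero]⟩

theorem LinearMap.ker_toSpanSingleton_id (R M : Type*) [CommSemiring R]
    [AddCommMonoid M] [Module R M] :
    LinearMap.ker (LinearMap.toSpanSingleton R (Module.End R M) LinearMap.id) =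
      Module.annihilator R M := by
  ext s
  simp [Module.mem_annihilator, LinearMap.ext_iff]

/-- If `Ann_R(M) = 0`, then `Hom_R(M, M)` is an Auslander `R`-module. -/
theorem hom_auslander (R : Type*) [CommRing R]
    (M : Type*) [AddCommGroup M] [Module R M]
    (hann : Module.annihilator R M = ⊥) :
    zeroDivisorsOn R R ⊆ zeroDivisorsOn R (M →ₗ[R] M) := by
  rw [← LinearMap.ker_toSpanSingleton_id, LinearMap.ker_eq_bot] at hann
  exact zeroDivisorsOn_subset_of_injective _ hann
end

section
/- Let R be a commutative ring, M an Auslander R-module, and S a multiplicatively closed subset of R such that no element of S is a zero-divisor on M (i.e., S ⊆ R − Z_R(M)). Then the localized module M_S is an Auslander module over the localized ring R_S, i.e., Z_{R_S}(R_S) ⊆ Z_{R_S}(M_S). -/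
/-!
A zero-divisor `r / s` of `R_S`, killing `a / t ≠ 0`, satisfies `u r a = 0` for some `u ∈ S`,
so it can be rewritten as `(u r) / (u s)` with numerator `u r ∈ Z_R(R) ⊆ Z_R(M)`. If `u r` kills
`m ≠ 0`, then `r / s` kills `m / 1`, which is nonzero because no element of `S` kills `m`.
-/

namespace Localization

variable {R : Type*} [CommRing R] {S : Submonoid R}

theorem exists_mk_eq_of_mem_zeroDivisorsOn {x : Localization S}
    (hx : x ∈ zeroDivisorsOn (Localization S) (Localization S)) :
    ∃ r ∈ zeroDivisorsOn R R, ∃ s : S, mk r s = x := by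
  obtain ⟨y, hy, hxy⟩ := hx
  induction x, y using Localization.induction_on₂ with | H p q =>
  obtain ⟨r, s⟩ := p
  obtain ⟨a, t⟩ := q
  rw [smul_eq_mul, mk_mul, mk_eq_mk'_apply, IsLocalization.mk'_eq_zero_iff] at hxy
  obtain ⟨u, hu⟩ := hxy
  refine ⟨u * r, ⟨a, ?_, ?_⟩, u * s, ?_⟩
  · rintro rfl
    exact hy (mk_zero t)
  · rw [smul_eq_mul, mul_assoc, hu]
  · rw [mk_eq_mk'_apply, mk_eq_mk'_apply, mul_comm (u : R), mul_comm u,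
      IsLocalization.mk'_cancel]

end Localization

namespace LocalizedModule

variable {R : Type*} [CommRing R] {S : Submonoid R} {M : Type*} [AddCommGroup M] [Module R M]

theorem mk_eq_zero_iff {m : M} {s : S} : mk m s = 0 ↔ ∃ u : S, u • m = 0 := by
  rw [IsLocalizedModule.mk_eq_mk', IsLocalizedModule.mk'_eq_zero']

theorem mk_one_ne_zero (hS : ∀ s ∈ S, s ∉ zeroDivisorsOn R M) {m : M} (hm : m ≠ 0) :
    mk m (1 : S) ≠ 0 := fun h ↦
  let ⟨u, hu⟩ := mk_eq_zero_iff.mp h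
  hS u u.2 ⟨m, hm, hu⟩

theorem mk_mem_zeroDivisorsOn (hS : ∀ s ∈ S, s ∉ zeroDivisorsOn R M) {r : R}
    (hr : r ∈ zeroDivisorsOn R M) (s : S) :
    Localization.mk r s ∈ zeroDivisorsOn (Localization S) (LocalizedModule S M) := by
  obtain ⟨m, hm, hrm⟩ := hr
  refine ⟨mk m 1, mk_one_ne_zero hS hm, ?_⟩
  rw [mk_smul_mk, hrm, zero_mk]

end LocalizedModule

/-- Localizing an Auslander module at a multiplicative set avoiding `Z_R(M)` yields an
Auslander module over the localized ring. -/
theorem localization_auslander (R : Type*) [CommRing R]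
    (M : Type*) [AddCommGroup M] [Module R M]
    (hM : zeroDivisorsOn R R ⊆ zeroDivisorsOn R M)
    (S : Submonoid R) (hS : ∀ s ∈ S, s ∉ zeroDivisorsOn R M) :
    zeroDivisorsOn (Localization S) (Localization S) ⊆
      zeroDivisorsOn (Localization S) (LocalizedModule S M) := by
  intro x hx
  obtain ⟨r, hr, s, rfl⟩ := Localization.exists_mk_eq_of_mem_zeroDivisorsOn hx
  exact LocalizedModule.mk_mem_zeroDivisorsOn hS (hM hr) s
end

section
/- Let R be a commutative ring and M an R-module having property (A). Then the polynomial module M[X] (sequences of elements of M with finite support, viewed as a module over the polynomial ring R[X]) is an Auslander R[X]-module if and only if M is an Auslander R-module. -/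
/-- An `R`-module `M` has property (A) if every finitely generated ideal `I ⊆ Z_R(M)`
has a nonzero annihilator in `M`. -/
def hasPropertyA (R : Type*) [CommRing R] (M : Type*) [AddCommGroup M] [Module R M] :
    Prop :=
  ∀ I : Ideal R, I.FG → (I : Set R) ⊆ zeroDivisorsOn R M →
    ∃ m : M, m ≠ 0 ∧ ∀ r ∈ I, r • m = 0

open Polynomial

namespace PolynomialModule

variable {R M : Type*} [CommRing R] [AddCommGroup M] [Module R M]

theorem coeff_C_smul (r : R) (p : PolynomialModule R M) (n : ℕ) :
    (C r • p).coeff n = r • p.coeff n := by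
  simp [← monomial_zero_left]

theorem single_zero_ne_zero {m : M} (hm : m ≠ 0) : single R 0 m ≠ 0 := by
  simpa [← coeff_eq_zero] using hm

theorem smul_single_zero_eq_zero {f : R[X]} {m : M} (h : ∀ n, f.coeff n • m = 0) :
    f • single R 0 m = 0 := by
  ext1
  ext n
  simp [h]

end PolynomialModule

section

variable {R : Type*} [CommRing R]

theorem C_mem_zeroDivisorsOn_polynomial {r : R} (hr : r ∈ zeroDivisorsOn R R) :
    C r ∈ zeroDivisorsOn R[X] R[X] := by
  obtain ⟨s, hs, hrs⟩ := hr
  exact ⟨C s, C_ne_zero.mpr hs, by rw [smul_eq_mul, ← C_mul, ← smul_eq_mul, hrs, C_0]⟩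

theorem mem_zeroDivisorsOn_of_C_mem_polynomialModule {M : Type*} [AddCommGroup M] [Module R M]
    {r : R} (hr : C r ∈ zeroDivisorsOn R[X] (PolynomialModule R M)) :
    r ∈ zeroDivisorsOn R M := by
  obtain ⟨p, hp, hrp⟩ := hr
  obtain ⟨n, hn⟩ : ∃ n, p.coeff n ≠ 0 := by
    by_contra! hc
    exact hp (PolynomialModule.coeff_injective (Finsupp.ext hc))
  refine ⟨p.coeff n, hn, ?_⟩
  simpa [PolynomialModule.coeff_C_smul] using congrArg (·.coeff n) hrp

/-- McCoy's theorem, in terms of coefficients. -/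
theorem exists_ne_zero_coeff_mul_eq_zero {f : R[X]} (hf : f ∈ zeroDivisorsOn R[X] R[X]) :
    ∃ c : R, c ≠ 0 ∧ ∀ n, f.coeff n * c = 0 := by
  obtain ⟨g, hg, hfg⟩ := hf
  have hf' : f ∉ nonZeroDivisors R[X] := fun hmem =>
    hg ((mul_left_mem_nonZeroDivisors_eq_zero_iff hmem).mp hfg)
  obtain ⟨c, hc, hcf⟩ := Polynomial.notMem_nonZeroDivisors_iff.mp hf'
  refine ⟨c, hc, fun n => ?_⟩
  simpa [mul_comm] using congrArg (coeff · n) hcf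

theorem span_coeffs_subset_zeroDivisorsOn {f : R[X]} (hf : f ∈ zeroDivisorsOn R[X] R[X]) :
    (Ideal.span (f.coeffs : Set R) : Set R) ⊆ zeroDivisorsOn R R := by
  obtain ⟨c, hc, hfc⟩ := exists_ne_zero_coeff_mul_eq_zero hf
  have hspan :
      Ideal.span (f.coeffs : Set R) ≤ LinearMap.ker (LinearMap.toSpanSingleton R R c) := by
    rw [Ideal.span_le]
    intro a ha
    obtain ⟨n, -, rfl⟩ := mem_coeffs_iff.mp ha
    exact hfc n
  exact fun r hr => ⟨c, hc, hspan hr⟩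

end

/-- If `M` has property (A), then `M[X]` is an Auslander `R[X]`-module iff `M` is an
Auslander `R`-module. -/
theorem polynomialModule_auslander_iff (R : Type*) [CommRing R]
    (M : Type*) [AddCommGroup M] [Module R M]
    (hA : hasPropertyA R M) :
    (zeroDivisorsOn (Polynomial R) (Polynomial R) ⊆
        zeroDivisorsOn (Polynomial R) (PolynomialModule R M)) ↔
      zeroDivisorsOn R R ⊆ zeroDivisorsOn R M := by
  refine ⟨fun h r hr => mem_zeroDivisorsOn_of_C_mem_polynomialModule
    (h (C_mem_zeroDivisorsOn_polynomial hr)), fun h f hf => ?_⟩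
  obtain ⟨m, hm, hkill⟩ :=
    hA _ ⟨f.coeffs, rfl⟩ ((span_coeffs_subset_zeroDivisorsOn hf).trans h)
  refine ⟨PolynomialModule.single R 0 m, PolynomialModule.single_zero_ne_zero hm,
    PolynomialModule.smul_single_zero_eq_zero fun n => ?_⟩
  by_cases hn : f.coeff n = 0
  · rw [hn, zero_smul]
  · exact hkill _ (Ideal.subset_span (coeff_mem_coeffs hn))
end

section
/- Let R be a commutative Noetherian ring and let f, g ∈ R[[X]] be formal power series with f·g = 0 and g ≠ 0. Then there is a nonzero constant r ∈ R such that f · r = 0 in R[[X]] (equivalently, r annihilates every coefficient of f). -/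
/-!
Write `a i` for the coefficients of `f`. By induction on `n` we find `h ≠ 0` with `f * h = 0` that
is killed by `a 0, …, a (n - 1)`. Let `T` be the index from which the annihilators of the powers of
`a n` stabilize. Then `a n ^ T • h = 0`: otherwise, comparing lowest-order terms in
`f * (a n ^ T • h) = 0` shows that `a n ^ (T + 1)`, hence `a n ^ T`, kills the coefficient of `h`
in that order, which is absurd. So `a n ^ t • h` with `t` largest such that it is nonzero is also
killed by `a n`. Finally the ideal generated by all the `a i` is generated by `a 0, …, a (N - 1)`
for some `N`, so any nonzero coefficient of the `h` obtained for `N` annihilates `f`.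
-/

open PowerSeries

theorem IsNoetherian.exists_pow_smul_eq_zero_of_pow_succ_smul_eq_zero {R M : Type*}
    [CommSemiring R] [AddCommMonoid M] [Module R M] [IsNoetherian R M] (b : R) :
    ∃ T : ℕ, ∀ x : M, b ^ (T + 1) • x = 0 → b ^ T • x = 0 := by
  obtain ⟨T, hT⟩ := monotone_stabilizes_iff_noetherian.mpr ‹_›
    (b • LinearMap.id : Module.End R M).iterateKer
  refine ⟨T, fun x hx => ?_⟩
  have hker : x ∈ (b • LinearMap.id : Module.End R M).iterateKer (T + 1) := by
    simpa [LinearMap.iterateKer, smul_pow] using hx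
  rw [← hT _ T.le_succ] at hker
  simpa [LinearMap.iterateKer, smul_pow] using hker

theorem exists_pow_smul_ne_zero_and_smul_pow_smul_eq_zero {R M : Type*} [Monoid R] [Zero M]
    [MulAction R M] {b : R} {x : M} (hx : x ≠ 0) {T : ℕ} (hT : b ^ T • x = 0) :
    ∃ t : ℕ, b ^ t • x ≠ 0 ∧ b • b ^ t • x = 0 := by
  induction T with
  | zero => exact absurd (by simpa using hT) hx
  | succ T ih =>
    by_cases hTx : b ^ T • x = 0
    · exact ih hTx
    · exact ⟨T, hTx, by rwa [smul_smul, ← pow_succ']⟩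

theorem Submodule.exists_forall_mem_span_image_Iio {R M : Type*} [Semiring R] [AddCommMonoid M]
    [Module R M] [IsNoetherian R M] (a : ℕ → M) :
    ∃ N : ℕ, ∀ k, a k ∈ span R (a '' Set.Iio N) := by
  have hmono : Monotone fun n => span R (a '' Set.Iio n) := fun _ _ hmn =>
    span_mono (Set.image_mono (Set.Iio_subset_Iio hmn))
  obtain ⟨N, hN : ∀ n, N ≤ n → span R (a '' Set.Iio N) = span R (a '' Set.Iio n)⟩ :=
    monotone_stabilizes_iff_noetherian.mpr ‹_› ⟨_, hmono⟩
  refine ⟨N, fun k => ?_⟩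
  rw [hN (max N (k + 1)) (le_max_left _ _)]
  exact subset_span ⟨k, by simp, rfl⟩

namespace PowerSeries

variable {R : Type*} [CommSemiring R]

theorem coeff_add_mul_eq_coeff_mul_coeff {f h : R⟦X⟧} {n m : ℕ}
    (hf : ∀ i < n, coeff i f • h = 0) (hh : ∀ j < m, coeff j h = 0) :
    coeff (n + m) (f * h) = coeff n f * coeff m h := by
  rw [coeff_mul, Finset.sum_eq_single (n, m)]
  · rintro ⟨i, j⟩ hij hne
    rw [Finset.HasAntidiagonal.mem_antidiagonal] at hij
    rcases lt_or_ge i n with hi | hi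
    · simpa using congrArg (coeff j) (hf i hi)
    · have hj : j < m := by
        by_contra! hj
        exact hne (Prod.ext (by omega) (by omega))
      rw [hh j hj, mul_zero]
  · simp

theorem coeff_mul_coeff_order_toNat_eq_zero {f h : R⟦X⟧} {n : ℕ} (hfh : f * h = 0)
    (hf : ∀ i < n, coeff i f • h = 0) : coeff n f * coeff h.order.toNat h = 0 := by
  rw [← coeff_add_mul_eq_coeff_mul_coeff hf fun j => coeff_of_lt_order_toNat j, hfh, map_zero]

theorem pow_smul_eq_zero_of_mul_eq_zero {f h : R⟦X⟧} {n T : ℕ} (hfh : f * h = 0)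
    (hf : ∀ i < n, coeff i f • h = 0)
    (hT : ∀ x : R, coeff n f ^ (T + 1) * x = 0 → coeff n f ^ T * x = 0) :
    coeff n f ^ T • h = 0 := by
  set x := coeff n f ^ T • h
  by_contra hx
  have hfx : f * x = 0 := by rw [mul_smul_comm, hfh, smul_zero]
  have hxf : ∀ i < n, coeff i f • x = 0 := fun i hi => by rw [smul_comm, hf i hi, smul_zero]
  have hlow := coeff_mul_coeff_order_toNat_eq_zero hfx hxf
  rw [coeff_smul, smul_eq_mul, ← mul_assoc, ← pow_succ'] at hlow
  have hlead := coeff_order hx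
  rw [coeff_smul, smul_eq_mul] at hlead
  exact hlead (hT _ hlow)

variable [IsNoetherianRing R]

theorem exists_ne_zero_mul_eq_zero_forall_coeff_smul_eq_zero {f g : R⟦X⟧} (hfg : f * g = 0)
    (hg : g ≠ 0) (n : ℕ) : ∃ h ≠ 0, f * h = 0 ∧ ∀ i < n, coeff i f • h = 0 := by
  induction n with
  | zero => exact ⟨g, hg, hfg, by simp⟩
  | succ n ih =>
    obtain ⟨h, hh, hfh, hf⟩ := ih
    obtain ⟨T, hT⟩ := IsNoetherian.exists_pow_smul_eq_zero_of_pow_succ_smul_eq_zero (M := R)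
      (coeff n f)
    obtain ⟨t, ht, htn⟩ := exists_pow_smul_ne_zero_and_smul_pow_smul_eq_zero hh
      (pow_smul_eq_zero_of_mul_eq_zero hfh hf hT)
    refine ⟨_, ht, by rw [mul_smul_comm, hfh, smul_zero], fun i hi => ?_⟩
    rcases Nat.lt_succ_iff_lt_or_eq.mp hi with hi | rfl
    · rw [smul_comm, hf i hi, smul_zero]
    · exact htn

end PowerSeries

/-- McCoy-type theorem for power series over a Noetherian ring: if `f * g = 0` with
`g ≠ 0` in `R[[X]]`, then `f` is annihilated by some nonzero constant `r ∈ R`. -/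
theorem powerSeries_mcCoy (R : Type*) [CommRing R] [IsNoetherianRing R]
    (f g : PowerSeries R) (hfg : f * g = 0) (hg : g ≠ 0) :
    ∃ r : R, r ≠ 0 ∧ f * PowerSeries.C r = 0 := by
  obtain ⟨N, hN⟩ := Submodule.exists_forall_mem_span_image_Iio (R := R) fun i => coeff i f
  obtain ⟨h, hh, -, hNh⟩ := exists_ne_zero_mul_eq_zero_forall_coeff_smul_eq_zero hfg hg N
  obtain ⟨m, hm⟩ := exists_coeff_ne_zero_iff_ne_zero.mpr hh
  have hspan : Submodule.span R ((fun i => coeff i f) '' Set.Iio N) ≤ (R ∙ h).annihilator := by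
    rw [Submodule.span_le]
    rintro _ ⟨i, hi, rfl⟩
    exact (Submodule.mem_annihilator_span_singleton _ _).mpr (hNh i hi)
  refine ⟨coeff m h, hm, ext fun k => ?_⟩
  have hk := (Submodule.mem_annihilator_span_singleton _ _).mp (hspan (hN k))
  simpa [mul_comm] using congrArg (coeff m) hk
end

section
/- Let R be a commutative ring, M an Auslander R-module having property (A), and B a commutative R-algebra that is faithfully flat as an R-module. For f ∈ B, define the content c(f) to be the intersection of all ideals I of R such that f ∈ IB. Assume: (i) B is an Ohm-Rush R-algebra, i.e., f ∈ c(f)B for every f ∈ B; (ii) c(f) is a finitely generated ideal of R for every f ∈ B; (iii) B is a McCoy R-algebra, i.e., whenever f·g = 0 in B with g ≠ 0, there is a nonzero r ∈ R with c(f)·r = (0). Then the B-module M ⊗_R B is an Auslander B-module, i.e., Z_B(B) ⊆ Z_B(M ⊗_R B). -/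
/-- The content `c(f)` of an element `f` of an `R`-algebra `B`: the intersection of all
ideals `I` of `R` such that `f ∈ IB`. -/
noncomputable def algContent (R : Type*) (B : Type*) [CommRing R] [CommRing B]
    [Algebra R B] (f : B) : Ideal R :=
  sInf {I : Ideal R | f ∈ Ideal.map (algebraMap R B) I}

open TensorProduct

/-! If `f` kills `g ≠ 0`, McCoy gives `r ≠ 0` with `c(f) r = 0`, so `c(f) ⊆ Z_R(R) ⊆ Z_R(M)`.
Property (A) then yields `m ≠ 0` with `c(f) m = 0`. By Ohm-Rush `f ∈ c(f)B`, hence `f` kills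
`1 ⊗ m`, which is nonzero because `B` is faithfully flat. -/

theorem TensorProduct.smul_one_tmul_eq_zero_of_mem_map {R B M : Type*} [CommSemiring R]
    [Semiring B] [Algebra R B] [AddCommMonoid M] [Module R M] {I : Ideal R} {m : M}
    (hm : ∀ a ∈ I, a • m = 0) {f : B} (hf : f ∈ I.map (algebraMap R B)) :
    f • ((1 : B) ⊗ₜ[R] m) = 0 := by
  have hle : I.map (algebraMap R B) ≤
      LinearMap.ker (LinearMap.toSpanSingleton B (B ⊗[R] M) (1 ⊗ₜ m)) :=
    Ideal.map_le_iff_le_comap.2 fun a ha => by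
      simp [algebraMap_smul, ← tmul_smul, hm a ha]
  exact hle hf

/-- If `M` is an Auslander `R`-module with property (A) and `B` is a faithfully flat
McCoy (Ohm-Rush) `R`-algebra, then `M ⊗_R B` is an Auslander `B`-module. -/
theorem tensor_auslander (R : Type*) [CommRing R]
    (M : Type*) [AddCommGroup M] [Module R M]
    (B : Type*) [CommRing B] [Algebra R B]
    (hM : zeroDivisorsOn R R ⊆ zeroDivisorsOn R M)
    (hA : hasPropertyA R M)
    (hff : Module.FaithfullyFlat R B)
    (hOhmRush : ∀ f : B, f ∈ Ideal.map (algebraMap R B) (algContent R B f))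
    (hFG : ∀ f : B, (algContent R B f).FG)
    (hMcCoy : ∀ f g : B, f * g = 0 → g ≠ 0 →
      ∃ r : R, r ≠ 0 ∧ ∀ a ∈ algContent R B f, a * r = 0) :
    zeroDivisorsOn B B ⊆ zeroDivisorsOn B (B ⊗[R] M) := by
  rintro f ⟨g, hg, hfg⟩
  obtain ⟨r, hr, hcr⟩ := hMcCoy f g hfg hg
  have hc : (algContent R B f : Set R) ⊆ zeroDivisorsOn R M :=
    fun a ha => hM ⟨r, hr, hcr a ha⟩
  obtain ⟨m, hm, hcm⟩ := hA _ (hFG f) hc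
  exact ⟨1 ⊗ₜ m, (Module.FaithfullyFlat.one_tmul_eq_zero_iff R M m).not.2 hm,
    smul_one_tmul_eq_zero_of_mem_map hcm (hOhmRush f)⟩
end

section
/- Let R be a commutative ring having property (A) (as a module over itself) and M an R-module. Then the polynomial module M[X], viewed as a module over the polynomial ring R[X], is a torsion-free R[X]-module if and only if M is a torsion-free R-module. -/
/-! McCoy's argument carries over to modules: if `f • p = 0` with `p ≠ 0` in `M[X]`, then some
nonzero `m : M` is killed by every coefficient of `f`, so the content ideal of `f` consists of
zero-divisors on `M`. When `M` is torsion-free these are zero-divisors of `R`, and property (A)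
gives a nonzero `r` annihilating the content ideal, i.e. `f * C r = 0`. -/

open Polynomial

namespace PolynomialModule

variable {R M : Type*} [CommRing R] [AddCommGroup M] [Module R M]

lemma coeff_smul (r : R) (p : PolynomialModule R M) (j : ℕ) :
    (r • p).coeff j = r • p.coeff j :=
  rfl

lemma coeff_smul_eq_zero {r : R} {p : PolynomialModule R M} (h : r • p = 0) (j : ℕ) :
    r • p.coeff j = 0 := by
  rw [← coeff_smul, h]
  rfl

lemma coeff_smul_add_eq {f : R[X]} {p : PolynomialModule R M} {l d : ℕ}
    (hf : ∀ i > l, f.coeff i • p = 0) (hp : ∀ j > d, p.coeff j = 0) :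
    (f • p).coeff (l + d) = f.coeff l • p.coeff d := by
  rw [smul_apply,
    Finset.sum_eq_single_of_mem (l, d) (Finset.HasAntidiagonal.mem_antidiagonal.mpr rfl)]
  rintro ⟨i, j⟩ hij hne
  rw [Finset.HasAntidiagonal.mem_antidiagonal] at hij
  rcases lt_or_ge l i with hi | hi
  · exact coeff_smul_eq_zero (hf i hi) j
  · rw [hp j (by grind), smul_zero]

/-- McCoy's argument: the coefficients of `f` kill `p` one at a time from the top, each step
lowering the degree bound of `p`. -/
lemma eq_zero_of_smul_eq_zero_of_coeff_eq_zero_of_ge {f : R[X]}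
    (hf : ∀ m : M, (∀ i, f.coeff i • m = 0) → m = 0) (d : ℕ) :
    ∀ p : PolynomialModule R M, (∀ j ≥ d, p.coeff j = 0) → f • p = 0 → p = 0 := by
  induction d with
  | zero => exact fun p hp _ ↦ coeff_injective (Finsupp.ext fun j ↦ hp j j.zero_le)
  | succ d ih =>
    intro p hp hfp
    have hcoeff : ∀ i, f.coeff i • p = 0 := by
      refine Nat.strong_decreasing_induction ⟨f.natDegree, fun i hi ↦ ?_⟩ fun l hl ↦ ?_
      · rw [coeff_eq_zero_of_natDegree_lt hi, zero_smul]
      refine ih _ (fun j hj ↦ ?_) (by rw [smul_comm, hfp, smul_zero])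
      rcases hj.eq_or_lt with rfl | hj
      · rw [coeff_smul, ← coeff_smul_add_eq hl hp, hfp]
        rfl
      · rw [coeff_smul, hp j hj, smul_zero]
    exact coeff_injective (Finsupp.ext fun j ↦ hf _ fun i ↦ coeff_smul_eq_zero (hcoeff i) j)

/-- McCoy's theorem for modules. -/
theorem exists_ne_zero_forall_coeff_smul_eq_zero {f : R[X]} {p : PolynomialModule R M}
    (hp : p ≠ 0) (hfp : f • p = 0) : ∃ m : M, m ≠ 0 ∧ ∀ i, f.coeff i • m = 0 := by
  by_contra! h
  obtain ⟨d, hd⟩ := p.coeff.support.exists_nat_subset_range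
  refine hp (eq_zero_of_smul_eq_zero_of_coeff_eq_zero_of_ge (fun m hm ↦ ?_) d p (fun j hj ↦ ?_)
    hfp)
  · by_contra hm0
    obtain ⟨i, hi⟩ := h m hm0
    exact hi (hm i)
  · by_contra hj0
    have := Finset.mem_range.mp (hd (Finsupp.mem_support_iff.mpr hj0))
    omega

end PolynomialModule

section ZeroDivisors

open PolynomialModule

variable {R M : Type*} [CommRing R] [AddCommGroup M] [Module R M]

lemma C_mem_zeroDivisorsOn_polynomialModule {r : R} (hr : r ∈ zeroDivisorsOn R M) :
    C r ∈ zeroDivisorsOn R[X] (PolynomialModule R M) := by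
  obtain ⟨m, hm, hrm⟩ := hr
  refine ⟨single R 0 m, fun h ↦ hm ?_, ?_⟩
  · simpa using congr(($h).coeff 0)
  · rw [← monomial_zero_left, monomial_smul_single, hrm, single_zero]

lemma mem_zeroDivisorsOn_of_C_mem {r : R} (h : C r ∈ zeroDivisorsOn R[X] R[X]) :
    r ∈ zeroDivisorsOn R R := by
  obtain ⟨g, hg, hrg⟩ := h
  obtain ⟨k, hk⟩ : ∃ k, g.coeff k ≠ 0 := by
    by_contra! hg0
    exact hg (Polynomial.ext hg0)
  exact ⟨g.coeff k, hk, by simpa using congr(($hrg).coeff k)⟩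

lemma Polynomial.contentIdeal_subset_zeroDivisorsOn {f : R[X]} {m : M} (hm : m ≠ 0)
    (hfm : ∀ i, f.coeff i • m = 0) : (f.contentIdeal : Set R) ⊆ zeroDivisorsOn R M := by
  have : f.contentIdeal ≤ (R ∙ m).annihilator := by
    rw [contentIdeal_def, Ideal.span_le]
    rintro _ hr
    obtain ⟨n, -, rfl⟩ := mem_coeffs_iff.mp hr
    exact (Submodule.mem_annihilator_span_singleton m _).mpr (hfm n)
  exact fun r hr ↦ ⟨m, hm, (Submodule.mem_annihilator_span_singleton m r).mp (this hr)⟩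

lemma Polynomial.mem_zeroDivisorsOn_of_contentIdeal_subset (hA : hasPropertyA R R) {f : R[X]}
    (hf : (f.contentIdeal : Set R) ⊆ zeroDivisorsOn R R) : f ∈ zeroDivisorsOn R[X] R[X] := by
  obtain ⟨r, hr, hfr⟩ := hA _ f.contentIdeal_FG hf
  refine ⟨C r, C_ne_zero.mpr hr, ?_⟩
  ext n
  rw [smul_eq_mul, coeff_mul_C, coeff_zero, ← smul_eq_mul, hfr _ (f.coeff_mem_contentIdeal n)]

end ZeroDivisors

/-- If `R` has property (A), then `M[X]` is a torsion-free `R[X]`-module iff `M` is a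
torsion-free `R`-module. -/
theorem polynomialModule_torsionFree_iff (R : Type*) [CommRing R]
    (M : Type*) [AddCommGroup M] [Module R M]
    (hA : hasPropertyA R R) :
    (zeroDivisorsOn (Polynomial R) (PolynomialModule R M) ⊆
        zeroDivisorsOn (Polynomial R) (Polynomial R)) ↔
      zeroDivisorsOn R M ⊆ zeroDivisorsOn R R := by
  constructor
  · exact fun h r hr ↦ mem_zeroDivisorsOn_of_C_mem (h (C_mem_zeroDivisorsOn_polynomialModule hr))
  · rintro h f ⟨p, hp, hfp⟩
    obtain ⟨m, hm, hfm⟩ := PolynomialModule.exists_ne_zero_forall_coeff_smul_eq_zero hp hfp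
    exact mem_zeroDivisorsOn_of_contentIdeal_subset hA
      ((contentIdeal_subset_zeroDivisorsOn hm hfm).trans h)
end

section
/- Let R be a commutative Noetherian ring and M a finitely generated flat R-module with Ann_R(M) = (0). Then the R-module Hom_R(M, M) is both torsion-free and Auslander, i.e., Z_R(Hom_R(M, M)) = Z_R(R). -/
section ZeroDivisorsOn

variable {R M : Type*} [CommRing R] [AddCommGroup M] [Module R M]

theorem notMem_zeroDivisorsOn_iff {r : R} : r ∉ zeroDivisorsOn R M ↔ IsSMulRegular M r := by
  rw [isSMulRegular_iff_right_eq_zero_of_smul]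
  simp only [zeroDivisorsOn, Set.mem_ofPred_eq, not_exists, not_and', ne_eq, not_not]

theorem zeroDivisorsOn_subset_of_flat [Module.Flat R M] :
    zeroDivisorsOn R M ⊆ zeroDivisorsOn R R := by
  intro r hrM
  by_contra hrR
  rw [notMem_zeroDivisorsOn_iff] at hrR
  have hreg : IsRegular r := (Commute.isRegular_iff (Commute.all r)).mpr hrR
  exact notMem_zeroDivisorsOn_iff.mpr (Module.Flat.isSMulRegular_of_isRegular hreg) hrM

theorem zeroDivisorsOn_linearMap_subset (N : Type*) [AddCommGroup N] [Module R N] :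
    zeroDivisorsOn R (N →ₗ[R] M) ⊆ zeroDivisorsOn R M := by
  rintro r ⟨f, hf, hrf⟩
  obtain ⟨x, hx⟩ : ∃ x, f x ≠ 0 := by
    by_contra! h
    exact hf (LinearMap.ext h)
  exact ⟨f x, hx, by rw [← LinearMap.smul_apply, hrf, LinearMap.zero_apply]⟩

theorem zeroDivisorsOn_subset_linearMap_of_annihilator_eq_bot
    (hann : Module.annihilator R M = ⊥) :
    zeroDivisorsOn R R ⊆ zeroDivisorsOn R (M →ₗ[R] M) := by
  rintro r ⟨s, hs, hrs⟩
  refine ⟨s • LinearMap.id, fun h => hs ?_, by rw [smul_smul, ← smul_eq_mul, hrs, zero_smul]⟩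
  rw [← Ideal.mem_bot, ← hann, Module.mem_annihilator]
  exact fun m => LinearMap.congr_fun h m

end ZeroDivisorsOn

theorem hom_torsionFree_auslander_general (R : Type*) [CommRing R]
    (M : Type*) [AddCommGroup M] [Module R M] [Module.Flat R M]
    (hann : Module.annihilator R M = ⊥) :
    zeroDivisorsOn R (M →ₗ[R] M) = zeroDivisorsOn R R :=
  ((zeroDivisorsOn_linearMap_subset M).trans zeroDivisorsOn_subset_of_flat).antisymm
    (zeroDivisorsOn_subset_linearMap_of_annihilator_eq_bot hann)

/-- Over a Noetherian ring, for a finitely generated flat module `M` with trivial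
annihilator, `Hom_R(M, M)` is torsion-free and Auslander. -/
theorem hom_torsionFree_auslander (R : Type*) [CommRing R] [IsNoetherianRing R]
    (M : Type*) [AddCommGroup M] [Module R M] [Module.Finite R M] [Module.Flat R M]
    (hann : Module.annihilator R M = ⊥) :
    zeroDivisorsOn R (M →ₗ[R] M) = zeroDivisorsOn R R :=
  hom_torsionFree_auslander_general R M hann
end
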